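/- Every triangle-free finite simple graph on n vertices admits a proper coloring with at most 3⌈√n⌉ colors in which every color class contains at most 2⌈√n⌉ vertices. -/

import Mathlib

/-!
Write `s = ⌈√n⌉`, so that `n ≤ s²`. While some vertex has at least `s` neighbours among the
remaining vertices, `s` of those neighbours form an independent set (the graph is
triangle-free), which becomes a colour class and is removed; this happens at most `n / s` times.
Once every remaining vertex has fewer than `s` remaining neighbours, repeatedly remove an
independent set of largest size among those with at most `s` vertices: either it has exactly `s`
vertices, or it dominates the rest and so lowers every remaining degree. Altogether this uses
at most `s + n / s ≤ 2s` classes, each of size at most `s`.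
-/

open SimpleGraph Finset

namespace SimpleGraph

variable {V : Type*} {G : SimpleGraph V}

variable (G) in
def IsIndepCover (m : ℕ) (A : Finset V) (P : Finset (Finset V)) : Prop :=
  (∀ v ∈ A, ∃ I ∈ P, v ∈ I) ∧ ∀ I ∈ P, G.IsIndepSet I ∧ #I ≤ m

lemma isIndepCover_empty (m : ℕ) : G.IsIndepCover m ∅ ∅ := by
  simp [IsIndepCover]

lemma IsIndepCover.insert [DecidableEq V] {m : ℕ} {A I : Finset V} {P : Finset (Finset V)}
    (hP : G.IsIndepCover m (A \ I) P) (hI : G.IsIndepSet I) (hIm : #I ≤ m) :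
    G.IsIndepCover m A (insert I P) := by
  refine ⟨fun v hv => ?_, (forall_mem_insert _ _ _).2 ⟨⟨hI, hIm⟩, hP.2⟩⟩
  by_cases hvI : v ∈ I
  · exact ⟨I, mem_insert_self _ _, hvI⟩
  · obtain ⟨J, hJ, hvJ⟩ := hP.1 v (mem_sdiff.2 ⟨hv, hvI⟩)
    exact ⟨J, mem_insert_of_mem hJ, hvJ⟩

lemma IsIndepCover.exists_coloring [Fintype V] {m k : ℕ} {P : Finset (Finset V)}
    (hP : G.IsIndepCover m univ P) (hk : #P ≤ k) :
    ∃ c : G.Coloring (Fin k), ∀ i, #{v | c v = i} ≤ m := by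
  choose I hIP hvI using fun v => hP.1 v (mem_univ v)
  let e : P ↪ Fin k := P.equivFin.toEmbedding.trans (Fin.castLEEmb hk)
  have hI_eq {u w : V} (h : e ⟨I u, hIP u⟩ = e ⟨I w, hIP w⟩) : I u = I w :=
    congrArg Subtype.val (e.injective h)
  let c : G.Coloring (Fin k) := Coloring.mk (fun v => e ⟨I v, hIP v⟩) fun {u w} huw h =>
    (hP.2 _ (hIP w)).1 (hI_eq h ▸ hvI u) (hvI w) huw.ne huw
  refine ⟨c, fun i => ?_⟩
  obtain h | ⟨v, hv⟩ := (univ.filter fun v => c v = i).eq_empty_or_nonempty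
  · simp [h]
  calc #{w | c w = i} ≤ #(I v) := card_le_card fun w hw =>
        hI_eq ((mem_filter.1 hw).2.trans (mem_filter.1 hv).2.symm) ▸ hvI w
    _ ≤ m := (hP.2 _ (hIP v)).2

section Greedy

variable [DecidableEq V] [DecidableRel G.Adj]

variable (G) in
lemma exists_indepSet_card_eq_or_dominating {m : ℕ} (hm : 0 < m) {B : Finset V}
    (hB : B.Nonempty) :
    ∃ M ⊆ B, M.Nonempty ∧ G.IsIndepSet M ∧ #M ≤ m ∧
      (#M = m ∨ ∀ v ∈ B \ M, ∃ u ∈ M, G.Adj v u) := by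
  have hcand :
      (B.powerset.filter fun M : Finset V => G.IsIndepSet (M : Set V) ∧ #M ≤ m).Nonempty := by
    obtain ⟨v, hv⟩ := hB
    exact ⟨{v}, by simpa using ⟨hv, hm⟩⟩
  obtain ⟨M, hM, hMmax⟩ := exists_max_image _ card hcand
  simp only [mem_filter, mem_powerset, and_imp] at hM hMmax
  obtain ⟨hMB, hMind, hMm⟩ := hM
  have hMne : M.Nonempty := by
    obtain ⟨v, hv⟩ := hB
    exact card_pos.1 (hMmax {v} (by simpa) (by simp) (by simpa using Nat.one_le_of_lt hm))
  refine ⟨M, hMB, hMne, hMind, hMm, or_iff_not_imp_left.2 fun hMm' v hv => ?_⟩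
  obtain ⟨hvB, hvM⟩ := mem_sdiff.1 hv
  by_contra! hvM_nonadj
  have hins : G.IsIndepSet (insert v M : Finset V) := by
    rw [coe_insert, IsIndepSet, Set.pairwise_insert]
    exact ⟨hMind, fun u hu _ => ⟨hvM_nonadj u hu, fun h => hvM_nonadj u hu h.symm⟩⟩
  have := hMmax _ (insert_subset hvB hMB) hins (by rw [card_insert_of_notMem hvM]; omega)
  rw [card_insert_of_notMem hvM] at this
  omega

lemma card_filter_adj_sdiff_lt {B M : Finset V} {u v : V} (huM : u ∈ M) (huB : u ∈ B)
    (hvu : G.Adj v u) : #{w ∈ B \ M | G.Adj v w} < #{w ∈ B | G.Adj v w} := by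
  refine card_lt_card ((ssubset_iff_of_subset (filter_subset_filter _ sdiff_subset)).2 ?_)
  exact ⟨u, mem_filter.2 ⟨huB, hvu⟩, fun h => (mem_sdiff.1 (mem_filter.1 h).1).2 huM⟩

theorem exists_isIndepCover_of_degree_lt {m : ℕ} (hm : 0 < m) (B : Finset V) (d : ℕ)
    (hB : ∀ v ∈ B, #{w ∈ B | G.Adj v w} < d) :
    ∃ P, G.IsIndepCover m B P ∧ #P ≤ d + #B / m := by
  induction B using Finset.strongInduction generalizing d with
  | H B ih =>
  obtain rfl | hBne := B.eq_empty_or_nonempty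
  · exact ⟨∅, isIndepCover_empty m, by simp⟩
  obtain ⟨M, hMB, hMne, hMind, hMm, hM⟩ := G.exists_indepSet_card_eq_or_dominating hm hBne
  rcases hM with hMm' | hdom
  · obtain ⟨P, hP, hPcard⟩ := ih _ (sdiff_ssubset hMB hMne) d fun v hv =>
      (card_le_card (filter_subset_filter _ sdiff_subset)).trans_lt (hB v (mem_sdiff.1 hv).1)
    refine ⟨insert M P, hP.insert hMind hMm, (card_insert_le _ _).trans ?_⟩
    rw [card_sdiff_of_subset hMB, hMm'] at hPcard
    have := Nat.div_eq_sub_div hm (hMm' ▸ card_le_card hMB)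
    omega
  · obtain ⟨P, hP, hPcard⟩ := ih _ (sdiff_ssubset hMB hMne) (d - 1) fun v hv => by
      obtain ⟨u, huM, hvu⟩ := hdom v hv
      have := card_filter_adj_sdiff_lt huM (hMB huM) hvu
      have := hB v (mem_sdiff.1 hv).1
      omega
    refine ⟨insert M P, hP.insert hMind hMm, (card_insert_le _ _).trans ?_⟩
    obtain ⟨v, hv⟩ := hBne
    have := hB v hv
    have := Nat.div_le_div_right (c := m) (card_le_card (sdiff_subset : B \ M ⊆ B))
    omega

end Greedy

theorem exists_isIndepCover_of_cliqueFree (hG : G.CliqueFree 3) {s : ℕ} (hs : 0 < s)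
    (A : Finset V) : ∃ P, G.IsIndepCover s A P ∧ #P ≤ s + #A / s := by
  classical
  induction A using Finset.strongInduction with
  | H A ih =>
  by_cases hdeg : ∀ v ∈ A, #{w ∈ A | G.Adj v w} < s
  · exact exists_isIndepCover_of_degree_lt hs A s hdeg
  push Not at hdeg
  obtain ⟨v, -, hv⟩ := hdeg
  obtain ⟨N, hNv, hNcard⟩ := exists_subset_card_eq hv
  have hNA : N ⊆ A := hNv.trans (filter_subset _ _)
  have hNind : G.IsIndepSet (N : Set V) :=
    (isIndepSet_neighborSet_of_triangleFree G hG v).mono fun w hw => (mem_filter.1 (hNv hw)).2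
  obtain ⟨P, hP, hPcard⟩ := ih _ (sdiff_ssubset hNA (card_pos.1 (hNcard ▸ hs)))
  refine ⟨insert N P, hP.insert hNind hNcard.le, (card_insert_le _ _).trans ?_⟩
  rw [card_sdiff_of_subset hNA, hNcard] at hPcard
  have := Nat.div_eq_sub_div hs (hNcard ▸ card_le_card hNA)
  omega

theorem exists_isIndepCover_univ_of_cliqueFree [Fintype V] (hG : G.CliqueFree 3) {s : ℕ}
    (hn : Fintype.card V ≤ s * s) : ∃ P, G.IsIndepCover s univ P ∧ #P ≤ 2 * s := by
  obtain rfl | hs := s.eq_zero_or_pos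
  · have : IsEmpty V := Fintype.card_eq_zero_iff.1 (Nat.le_zero.1 hn)
    exact ⟨∅, by simpa using isIndepCover_empty (G := G) 0, by simp⟩
  obtain ⟨P, hP, hPcard⟩ := exists_isIndepCover_of_cliqueFree hG hs univ
  have : #(univ : Finset V) / s ≤ s := Nat.div_le_of_le_mul (by simpa using hn)
  exact ⟨P, hP, by omega⟩

end SimpleGraph

theorem triangleFree_balanced_coloring {V : Type*} [Fintype V] (G : SimpleGraph V)
    (h : G.CliqueFree 3) :
    ∃ c : G.Coloring (Fin (3 * ⌈Real.sqrt (Fintype.card V)⌉₊)),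
      ∀ i, (Finset.univ.filter fun v => c v = i).card
        ≤ 2 * ⌈Real.sqrt (Fintype.card V)⌉₊ := by
  set s := ⌈Real.sqrt (Fintype.card V)⌉₊
  have hn : Fintype.card V ≤ s * s := by
    have := (Real.sqrt_le_iff.1 (Nat.le_ceil (Real.sqrt (Fintype.card V)))).2
    rw [← sq]
    exact_mod_cast this
  obtain ⟨P, hP, hPcard⟩ := exists_isIndepCover_univ_of_cliqueFree h hn
  obtain ⟨c, hc⟩ := hP.exists_coloring (k := 3 * s) (by omega)
  exact ⟨c, fun i => (hc i).trans (by omega)⟩
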